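/- arXiv:2308.08745 — 5 statements merged into one kernel-verified Lean document; each statement's English description precedes it below -/
import Mathlib

section
/- Let Δ be a d-dimensional random vector with E[Δ] = 0 and all fourth moments finite, and let δ ∈ ℝ^d be arbitrary. Then E[((Δ + δ)ᵀ(Δ + δ))²] − (δᵀδ)² ≥ (E[Δᵀ Δ])². -/
/-!
Put `F = |Δ + δ|²`. Since `Δ` is centred, `E F = E|Δ|² + |δ|²`, and the variance of `F` is
nonnegative, so `E F² ≥ (E F)² = (E|Δ|² + |δ|²)² ≥ (E|Δ|²)² + |δ|⁴`.
-/

open MeasureTheory Finset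

open scoped ENNReal

section

variable {Ω : Type*} [MeasurableSpace Ω] {μ : Measure Ω}

theorem MeasureTheory.MemLp.sq {p : ℝ≥0∞} {f : Ω → ℝ} (hf : MemLp f (2 * p) μ) :
    MemLp (fun ω => f ω ^ 2) p μ := by
  have : ENNReal.HolderTriple (2 * p) (2 * p) p :=
    ⟨by rw [← two_mul, ENNReal.mul_inv (by simp) (by simp), ← mul_assoc,
      ENNReal.mul_inv_cancel (by simp) (by simp), one_mul]⟩
  simpa only [pow_two] using hf.mul' (r := p) hf

variable [IsProbabilityMeasure μ]

theorem sq_integral_le_integral_sq {f : Ω → ℝ} (hf : MemLp f 2 μ) :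
    (∫ ω, f ω ∂μ) ^ 2 ≤ ∫ ω, f ω ^ 2 ∂μ := by
  have h := ProbabilityTheory.variance_nonneg f μ
  rw [ProbabilityTheory.variance_eq_sub hf] at h
  simpa using h

theorem integral_add_const_sq {f : Ω → ℝ} (hf : MemLp f 2 μ) (hmean : ∫ ω, f ω ∂μ = 0)
    (a : ℝ) : ∫ ω, (f ω + a) ^ 2 ∂μ = ∫ ω, f ω ^ 2 ∂μ + a ^ 2 := by
  have hf1 : Integrable f μ := hf.integrable one_le_two
  have hexpand : ∀ ω, (f ω + a) ^ 2 = f ω ^ 2 + (2 * a * f ω + a ^ 2) := fun ω => by ring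
  simp_rw [hexpand]
  rw [integral_add hf.integrable_sq (by fun_prop), integral_add (by fun_prop) (by fun_prop),
    integral_const_mul, hmean]
  simp

theorem integral_sum_sq_add_const {ι : Type*} [Fintype ι] {X : Ω → ι → ℝ}
    (hX : ∀ i, MemLp (fun ω => X ω i) 2 μ) (hmean : ∀ i, ∫ ω, X ω i ∂μ = 0) (a : ι → ℝ) :
    ∫ ω, ∑ i, (X ω i + a i) ^ 2 ∂μ = ∫ ω, ∑ i, X ω i ^ 2 ∂μ + ∑ i, a i ^ 2 := by
  have hXa (i : ι) : MemLp (fun ω => X ω i + a i) 2 μ := (hX i).add (memLp_const (a i))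
  rw [integral_finsetSum _ fun i _ => (hXa i).integrable_sq,
    integral_finsetSum _ fun i _ => (hX i).integrable_sq, ← sum_add_distrib]
  exact sum_congr rfl fun i _ => integral_add_const_sq (hX i) (hmean i) (a i)

end

theorem pearson_multivariate
    {Ω : Type*} [MeasurableSpace Ω] (μ : Measure Ω) [IsProbabilityMeasure μ]
    (d : ℕ) (Δ : Ω → Fin d → ℝ)
    (hL4 : ∀ i, MemLp (fun ω => Δ ω i) 4 μ)
    (hmean : ∀ i, ∫ ω, Δ ω i ∂μ = 0)
    (δ : Fin d → ℝ) :
    (∫ ω, (∑ i, (Δ ω i + δ i) ^ 2) ^ 2 ∂μ) - (∑ i, δ i ^ 2) ^ 2 ≥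
      (∫ ω, ∑ i, (Δ ω i) ^ 2 ∂μ) ^ 2 := by
  rw [show (4 : ℝ≥0∞) = 2 * 2 by norm_num] at hL4
  have hL2 (i : Fin d) : MemLp (fun ω => Δ ω i) 2 μ := (hL4 i).mono_exponent (by norm_num)
  have hF : MemLp (fun ω => ∑ i, (Δ ω i + δ i) ^ 2) 2 μ :=
    memLp_finsetSum _ fun i _ => ((hL4 i).add (memLp_const (δ i))).sq
  have hm : 0 ≤ ∫ ω, ∑ i, Δ ω i ^ 2 ∂μ := integral_nonneg fun ω => by positivity
  have hc : 0 ≤ ∑ i, δ i ^ 2 := by positivity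
  have hvar := sq_integral_le_integral_sq hF
  rw [integral_sum_sq_add_const hL2 hmean δ] at hvar
  nlinarith [mul_nonneg hm hc]
end

section
/- Let Δ be a d-dimensional L⁴ random vector with E[Δ] = 0 and let D be a d×d positive definite matrix. Then E[(ΔᵀΔ)²] − E[(ΔᵀΔ)Δᵀ] (E[ΔΔᵀ] + D)⁻¹ E[Δ(ΔᵀΔ)] ≥ (E[ΔᵀΔ])². -/
open MeasureTheory Finset Matrix

private lemma integrable_mul_of_L2 {Ω : Type*} [MeasurableSpace Ω] {μ : Measure Ω}
    {f g : Ω → ℝ} (hf : MemLp f 2 μ) (hg : MemLp g 2 μ) :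
    Integrable (fun ω => f ω * g ω) μ := by
  rw [← memLp_one_iff_integrable]
  exact hg.smul hf

theorem pearson_multivariate_matrix
    {Ω : Type*} [MeasurableSpace Ω] (μ : Measure Ω) [IsProbabilityMeasure μ]
    (d : ℕ) (Δ : Ω → Fin d → ℝ)
    (hL4 : ∀ i, MemLp (fun ω => Δ ω i) 4 μ)
    (hmean : ∀ i, ∫ ω, Δ ω i ∂μ = 0)
    (D : Matrix (Fin d) (Fin d) ℝ) (hD : D.PosDef) :
    (∫ ω, (∑ i, (Δ ω i) ^ 2) ^ 2 ∂μ) -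
      (fun i => ∫ ω, Δ ω i * ∑ j, (Δ ω j) ^ 2 ∂μ) ⬝ᵥ
        (((Matrix.of fun i j => ∫ ω, Δ ω i * Δ ω j ∂μ) + D)⁻¹ *ᵥ
          fun i => ∫ ω, Δ ω i * ∑ j, (Δ ω j) ^ 2 ∂μ) ≥
      (∫ ω, ∑ i, (Δ ω i) ^ 2 ∂μ) ^ 2 := by
  classical
  set b : Fin d → ℝ := fun i => ∫ ω, Δ ω i * ∑ j, (Δ ω j) ^ 2 ∂μ with hb
  set Sm : Matrix (Fin d) (Fin d) ℝ := Matrix.of fun i j => ∫ ω, Δ ω i * Δ ω j ∂μ with hSm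
  set M : Matrix (Fin d) (Fin d) ℝ := Sm + D with hM
  set a : Fin d → ℝ := M⁻¹ *ᵥ b with ha
  -- basic Lᵖ facts
  have hΔ2 : ∀ i, MemLp (fun ω => Δ ω i) 2 μ := fun i =>
    (hL4 i).mono_exponent (by norm_num)
  have hΔsq : ∀ i, MemLp (fun ω => (Δ ω i) ^ 2) 2 μ := by
    intro i
    have h4 : (1:ENNReal)/2 = 1/4 + 1/4 := by
      simp only [one_div]
      rw [← two_mul, show (4:ENNReal) = 2*2 by norm_num,
        ENNReal.mul_inv (by norm_num) (by norm_num), ← mul_assoc,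
        ENNReal.mul_inv_cancel (by norm_num) (by norm_num), one_mul]
    have h := (hL4 i).smul (hL4 i) (r := 2) (hpqr := ⟨by simpa [one_div] using h4.symm⟩)
    simpa [pow_two, Pi.smul_apply, smul_eq_mul, Pi.mul_def] using h
  have hS : MemLp (fun ω => ∑ i, (Δ ω i) ^ 2) 2 μ := by
    have := memLp_finset_sum (univ : Finset (Fin d))
      (f := fun i ω => (Δ ω i) ^ 2) (fun i _ => hΔsq i)
    simpa using this
  have hquadint : ∀ x : Fin d → ℝ, MemLp (fun ω => ∑ i, x i * Δ ω i) 2 μ := by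
    intro x
    have := memLp_finset_sum (univ : Finset (Fin d))
      (f := fun i ω => x i * Δ ω i) (fun i _ => (hΔ2 i).const_mul (x i))
    simpa using this
  have hT : MemLp (fun ω => ∑ i, a i * Δ ω i) 2 μ := hquadint a
  -- a general quadratic-form identity
  have hquad : ∀ x : Fin d → ℝ,
      ∫ ω, (∑ i, x i * Δ ω i) ^ 2 ∂μ = x ⬝ᵥ (Sm *ᵥ x) := by
    intro x
    have hpt : ∀ ω, (∑ i, x i * Δ ω i) ^ 2
        = ∑ i, x i * ∑ j, (Δ ω i * Δ ω j) * x j := by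
      intro ω
      rw [pow_two, Finset.sum_mul_sum]
      refine Finset.sum_congr rfl fun i _ => ?_
      rw [Finset.mul_sum]
      refine Finset.sum_congr rfl fun j _ => ?_
      ring
    have hin : ∀ i, Integrable (fun ω => ∑ j, (Δ ω i * Δ ω j) * x j) μ := fun i =>
      integrable_finset_sum _ (fun j _ => (integrable_mul_of_L2 (hΔ2 i) (hΔ2 j)).mul_const (x j))
    simp_rw [hpt]
    rw [integral_finset_sum _ (fun i _ => (hin i).const_mul (x i))]
    simp only [integral_const_mul, mulVec, dotProduct, Matrix.of_apply, hSm]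
    refine Finset.sum_congr rfl fun i _ => ?_
    congr 1
    rw [integral_finset_sum _ (fun j _ =>
      (integrable_mul_of_L2 (hΔ2 i) (hΔ2 j)).mul_const (x j))]
    refine Finset.sum_congr rfl fun j _ => ?_
    rw [integral_mul_const]
  -- Sm is positive semidefinite
  have hS_sym : Sm.IsHermitian := by
    show Smᴴ = Sm
    ext i j
    simp only [conjTranspose_apply, star_trivial, hSm, Matrix.of_apply]
    congr 1; funext ω; ring
  have hS_psd : Sm.PosSemidef := by
    refine .of_dotProduct_mulVec_nonneg hS_sym fun x => ?_
    have hx : star x = x := by funext i; simp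
    rw [hx, ← hquad x]
    exact integral_nonneg fun ω => sq_nonneg _
  have hMpd : M.PosDef := Matrix.PosDef.posSemidef_add hS_psd hD
  have hMdet : IsUnit M.det := isUnit_iff_ne_zero.mpr hMpd.det_pos.ne'
  have hMb : M *ᵥ a = b := by
    rw [ha, Matrix.mulVec_mulVec, Matrix.mul_nonsing_inv _ hMdet, Matrix.one_mulVec]
  -- integrability of the pieces
  have hbint : ∀ i, Integrable (fun ω => Δ ω i * ∑ j, (Δ ω j) ^ 2) μ :=
    fun i => integrable_mul_of_L2 (hΔ2 i) hS
  have hST : ∫ ω, (∑ i, a i * Δ ω i) * (∑ j, (Δ ω j) ^ 2) ∂μ = a ⬝ᵥ b := by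
    have hpt : ∀ ω, (∑ i, a i * Δ ω i) * (∑ j, (Δ ω j) ^ 2)
        = ∑ i, a i * (Δ ω i * ∑ j, (Δ ω j) ^ 2) := by
      intro ω; rw [Finset.sum_mul]; congr 1; funext i; ring
    simp_rw [hpt]
    rw [integral_finset_sum _ (fun i _ => (hbint i).const_mul (a i))]
    simp only [integral_const_mul, dotProduct, hb]
  -- variance inequality
  have hX : MemLp (fun ω => (∑ i, (Δ ω i) ^ 2) - ∑ i, a i * Δ ω i) 2 μ := hS.sub hT
  have hvar := ProbabilityTheory.variance_nonneg
    (fun ω => (∑ i, (Δ ω i) ^ 2) - ∑ i, a i * Δ ω i) μ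
  rw [ProbabilityTheory.variance_eq_sub hX] at hvar
  have hTzero : ∫ ω, ∑ i, a i * Δ ω i ∂μ = 0 := by
    rw [integral_finset_sum _ (fun i _ => ((hΔ2 i).integrable one_le_two).const_mul (a i))]
    simp [integral_const_mul, hmean]
  have hEX : ∫ ω, ((∑ i, (Δ ω i) ^ 2) - ∑ i, a i * Δ ω i) ∂μ
      = ∫ ω, ∑ i, (Δ ω i) ^ 2 ∂μ := by
    rw [integral_sub (hS.integrable one_le_two) (hT.integrable one_le_two), hTzero, sub_zero]
  have h1 : Integrable (fun ω => (∑ i, (Δ ω i) ^ 2) ^ 2) μ := hS.integrable_sq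
  have h2 : Integrable (fun ω => (∑ i, a i * Δ ω i) * (∑ j, (Δ ω j) ^ 2)) μ :=
    integrable_mul_of_L2 hT hS
  have h3 : Integrable (fun ω => (∑ i, a i * Δ ω i) ^ 2) μ := hT.integrable_sq
  have hX2 : ∫ ω, ((∑ i, (Δ ω i) ^ 2) - ∑ i, a i * Δ ω i) ^ 2 ∂μ
      = (∫ ω, (∑ i, (Δ ω i) ^ 2) ^ 2 ∂μ) - 2 * (a ⬝ᵥ b) + a ⬝ᵥ (Sm *ᵥ a) := by
    have hpt : ∀ ω, ((∑ i, (Δ ω i) ^ 2) - ∑ i, a i * Δ ω i) ^ 2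
        = (∑ i, (Δ ω i) ^ 2) ^ 2 - 2 * ((∑ i, a i * Δ ω i) * (∑ j, (Δ ω j) ^ 2))
          + (∑ i, a i * Δ ω i) ^ 2 := by intro ω; ring
    simp_rw [hpt]
    rw [integral_add (f := fun ω => (∑ i, (Δ ω i) ^ 2) ^ 2
        - 2 * ((∑ i, a i * Δ ω i) * (∑ j, (Δ ω j) ^ 2)))
      (g := fun ω => (∑ i, a i * Δ ω i) ^ 2) (h1.sub (h2.const_mul 2)) h3,
      integral_sub (f := fun ω => (∑ i, (Δ ω i) ^ 2) ^ 2)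
      (g := fun ω => 2 * ((∑ i, a i * Δ ω i) * (∑ j, (Δ ω j) ^ 2))) h1 (h2.const_mul 2),
      integral_const_mul, hST, hquad a]
  -- final algebra
  have hba : b ⬝ᵥ a = a ⬝ᵥ (Sm *ᵥ a) + a ⬝ᵥ (D *ᵥ a) := by
    rw [← hMb, dotProduct_comm, hM, Matrix.add_mulVec, dotProduct_add]
  have hab : a ⬝ᵥ b = b ⬝ᵥ a := dotProduct_comm a b
  have hDnn : 0 ≤ a ⬝ᵥ (D *ᵥ a) := by
    have := hD.posSemidef.dotProduct_mulVec_nonneg a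
    simpa using this
  have hkey : (∫ ω, ∑ i, (Δ ω i) ^ 2 ∂μ) ^ 2
      ≤ (∫ ω, (∑ i, (Δ ω i) ^ 2) ^ 2 ∂μ) - 2 * (a ⬝ᵥ b) + a ⬝ᵥ (Sm *ᵥ a) := by
    have h := hvar
    simp only [Pi.pow_apply] at h
    rw [hX2, hEX] at h
    linarith
  have hgoal : b ⬝ᵥ a = a ⬝ᵥ (Sm *ᵥ a) + a ⬝ᵥ (D *ᵥ a) := hba
  linarith
end

section
/- Let Σ be a d×d positive definite real matrix, let π ∈ ℝ^d with 1 − Σ_{i=1}^d πⁱ ≠ 0, let H¹,…,H^d be nonzero real numbers, and define for each i the vector Uⁱ = Hⁱ Σ^{1/2}(π − eᵢ), where {eᵢ} is the standard basis. Then the vectors U¹,…,U^d are linearly independent; equivalently, the matrix U with columns Uⁱ is invertible. -/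
open Finset Matrix

section

open scoped ComplexOrder

/-- The square root of a positive semidefinite matrix, as defined in Mathlib (Dec 2024),
which has since removed `Matrix.PosSemidef.sqrt`. -/
noncomputable def Matrix.PosSemidef.sqrt {n 𝕜 : Type*} [Fintype n] [RCLike 𝕜] [DecidableEq n]
    {A : Matrix n n 𝕜} (hA : A.PosSemidef) : Matrix n n 𝕜 :=
  hA.1.eigenvectorUnitary.1 * diagonal ((↑) ∘ (√·) ∘ hA.1.eigenvalues) *
    (star hA.1.eigenvectorUnitary : Matrix n n 𝕜)

end

theorem columns_linearly_independent
    (d : ℕ) (Sig : Matrix (Fin d) (Fin d) ℝ) (hSig : Sig.PosDef)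
    (π : Fin d → ℝ) (hπ0 : 1 - ∑ i, π i ≠ 0)
    (H : Fin d → ℝ) (hH : ∀ i, H i ≠ 0) :
    IsUnit (Matrix.of fun i j =>
      H j * ((hSig.posSemidef.sqrt *ᵥ (π - Pi.single j 1)) i) : Matrix (Fin d) (Fin d) ℝ) := by
  set S := hSig.posSemidef.sqrt with hS
  have hfact : (Matrix.of fun i j =>
      H j * ((S *ᵥ (π - Pi.single j 1)) i) : Matrix (Fin d) (Fin d) ℝ)
      = S * ((Matrix.replicateCol Unit π * Matrix.replicateRow Unit (1 : Fin d → ℝ) - 1) * Matrix.diagonal H) := by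
    ext i j
    simp only [Matrix.of_apply, Matrix.mulVec, Matrix.mul_apply, dotProduct,
      Matrix.sub_apply, Matrix.diagonal, Matrix.replicateCol_apply, Matrix.replicateRow_apply,
      Matrix.one_apply, Pi.sub_apply, Pi.one_apply]
    rw [Finset.mul_sum]
    refine Finset.sum_congr rfl fun k _ => ?_
    rw [Finset.sum_eq_single j (by intro b _ hb; simp [Matrix.of_apply, hb])
      (by simp)]
    simp only [Matrix.of_apply, if_pos rfl, Pi.single_apply]
    by_cases hkj : k = j <;> simp [hkj] <;> ring
  rw [hfact]
  have hdetS : S.det ≠ 0 := by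
    have h2 : S.det * S.det = Sig.det := by
      rw [← Matrix.det_mul]
      congr 1
      have hU := Unitary.coe_star_mul_self hSig.posSemidef.1.eigenvectorUnitary
      have hsp := hSig.posSemidef.1.spectral_theorem
      rw [Unitary.conjStarAlgAut_apply] at hsp
      conv_rhs => rw [hsp]
      simp only [hS, Matrix.PosSemidef.sqrt]
      rw [show ∀ a b c e f g : Matrix (Fin d) (Fin d) ℝ, a * b * c * (e * f * g) = a * (b * (c * e) * f) * g by
        intros; simp only [Matrix.mul_assoc]]
      rw [hU, Matrix.mul_one, diagonal_mul_diagonal]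
      congr 3
      funext i
      simp [Real.mul_self_sqrt (hSig.posSemidef.eigenvalues_nonneg i)]
    have := hSig.det_pos
    intro h0
    rw [h0, zero_mul] at h2
    exact this.ne' h2.symm
  have hdetA : (Matrix.replicateCol Unit π * Matrix.replicateRow Unit (1 : Fin d → ℝ) - (1 : Matrix (Fin d) (Fin d) ℝ)).det ≠ 0 := by
    have : (Matrix.replicateCol Unit π * Matrix.replicateRow Unit (1 : Fin d → ℝ) - (1 : Matrix (Fin d) (Fin d) ℝ))
        = -(1 + Matrix.replicateCol Unit (-π) * Matrix.replicateRow Unit (1 : Fin d → ℝ)) := by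
      ext i j
      simp only [Matrix.sub_apply, Matrix.neg_apply, Matrix.add_apply, Matrix.mul_apply,
        Matrix.replicateCol_apply, Matrix.replicateRow_apply, Matrix.one_apply, Pi.one_apply, Pi.neg_apply,
        Fintype.sum_unique]
      ring
    rw [this, Matrix.det_neg, Matrix.det_one_add_replicateCol_mul_replicateRow]
    have h1 : (1 : Fin d → ℝ) ⬝ᵥ (-π) = -∑ i, π i := by
      simp [dotProduct]
    rw [h1, Fintype.card_fin]
    exact mul_ne_zero (by positivity) (by intro h; exact hπ0 (by linarith))
  have hdetD : (Matrix.diagonal H).det ≠ 0 := by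
    rw [Matrix.det_diagonal]
    exact Finset.prod_ne_zero_iff.mpr fun i _ => hH i
  rw [Matrix.isUnit_iff_isUnit_det]
  simp only [Matrix.det_mul]
  exact (isUnit_iff_ne_zero).mpr (by
    exact mul_ne_zero hdetS (mul_ne_zero hdetA hdetD))
end

section
/- For every d×d positive definite matrix J and every invertible d×d matrix K, there exists a unique positive definite matrix L satisfying the algebraic Riccati equation 2·tr(LJ)·L + 4·L J L = Kᵀ J K. -/
open Matrix

lemma conj_posDef {d : ℕ} {M A : Matrix (Fin d) (Fin d) ℝ}
    (hM : M.PosDef) (hA : IsUnit A) : (Aᵀ * M * A).PosDef := by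
  refine Matrix.posDef_iff_dotProduct_mulVec.mpr ⟨?_, ?_⟩
  · have h1 : (Aᵀ * M * A)ᴴ = Aᴴ * Mᴴ * (Aᵀ)ᴴ := by
      simp [conjTranspose_mul, Matrix.mul_assoc]
    rw [IsHermitian, h1, hM.1.eq]
    simp [conjTranspose_eq_transpose_of_trivial]
  · intro x hx
    have hAx : A *ᵥ x ≠ 0 := by
      have hinj := (Matrix.mulVec_injective_iff_isUnit.mpr hA)
      intro h
      apply hx
      apply hinj
      simpa using h
    have key : star x ⬝ᵥ (Aᵀ * M * A) *ᵥ x = star (A *ᵥ x) ⬝ᵥ M *ᵥ (A *ᵥ x) := by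
      rw [← Matrix.mulVec_mulVec, ← Matrix.mulVec_mulVec, dotProduct_mulVec,
        Matrix.vecMul_transpose]
      simp [star, dotProduct_mulVec]
    rw [key]
    exact hM.dotProduct_mulVec_pos hAx

lemma sqrt_step {m x y : ℝ} (hm : 0 ≤ m) (hx : 0 ≤ x) (hxy : x ≤ y) :
    Real.sqrt (y^2 + m) ≤ (y - x) + Real.sqrt (x^2 + m) := by
  have hs : Real.sqrt (x^2 + m) ^ 2 = x^2 + m := Real.sq_sqrt (by positivity)
  have hs0 : 0 ≤ Real.sqrt (x^2+m) := Real.sqrt_nonneg _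
  have hsx : x ≤ Real.sqrt (x^2 + m) := by
    nlinarith [Real.sqrt_nonneg (x^2+m)]
  have h1 : y^2 + m ≤ ((y - x) + Real.sqrt (x^2 + m))^2 := by nlinarith
  calc Real.sqrt (y^2+m) ≤ Real.sqrt (((y - x) + Real.sqrt (x^2 + m))^2) :=
        Real.sqrt_le_sqrt h1
    _ = (y - x) + Real.sqrt (x^2 + m) := Real.sqrt_sq (by linarith)

lemma F_mono {d : ℕ} (μ : Fin d → ℝ) (hμ : ∀ i, 0 ≤ μ i) {x y : ℝ}
    (hx : 0 ≤ x) (hxy : x ≤ y) :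
    (∑ i, Real.sqrt (y^2 + 16 * μ i)) - (d + 4) * y ≤
      ((∑ i, Real.sqrt (x^2 + 16 * μ i)) - (d + 4) * x) - 4 * (y - x) := by
  have hsum : (∑ i, Real.sqrt (y^2 + 16 * μ i)) ≤
      ∑ i, ((y - x) + Real.sqrt (x^2 + 16 * μ i)) := by
    apply Finset.sum_le_sum
    intro i _
    exact sqrt_step (by linarith [hμ i]) hx hxy
  have : ∑ i, ((y - x) + Real.sqrt (x^2 + 16 * μ i)) =
      d * (y - x) + ∑ i, Real.sqrt (x^2 + 16 * μ i) := by
    simp [Finset.sum_add_distrib, mul_comm]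
    ring
  nlinarith [this ▸ hsum]

lemma F_root_unique {d : ℕ} (μ : Fin d → ℝ) (hμ : ∀ i, 0 ≤ μ i) {x y : ℝ}
    (hx : 0 ≤ x) (hy : 0 ≤ y)
    (hFx : (∑ i, Real.sqrt (x^2 + 16 * μ i)) = (d + 4) * x)
    (hFy : (∑ i, Real.sqrt (y^2 + 16 * μ i)) = (d + 4) * y) : x = y := by
  rcases le_total x y with h | h
  · have := F_mono μ hμ hx h
    rw [hFx, hFy] at this
    linarith
  · have := F_mono μ hμ hy h
    rw [hFx, hFy] at this
    linarith

lemma F_root_exists {d : ℕ} (hd : 0 < d) (μ : Fin d → ℝ) (hμ : ∀ i, 0 < μ i) :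
    ∃ c, 0 ≤ c ∧ (∑ i, Real.sqrt (c^2 + 16 * μ i)) = (d + 4) * c := by
  set F : ℝ → ℝ := fun c => (∑ i, Real.sqrt (c^2 + 16 * μ i)) - (d + 4) * c with hF
  set S : ℝ := ∑ i, Real.sqrt ((0:ℝ)^2 + 16 * μ i) with hS
  have hS0 : 0 < S := by
    apply Finset.sum_pos
    · intro i _
      apply Real.sqrt_pos.mpr
      nlinarith [hμ i]
    · haveI : Nonempty (Fin d) := Fin.pos_iff_nonempty.mp hd
      exact Finset.univ_nonempty
  have hF0 : F 0 = S := by simp [hF, hS]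
  have hFS : F S < 0 := by
    have h := F_mono μ (fun i => (hμ i).le) (le_refl 0) hS0.le
    have h2 : F S ≤ F 0 - 4 * (S - 0) := h
    rw [hF0] at h2
    simp only [hF]
    have h3 : F S = (∑ i, Real.sqrt (S^2 + 16 * μ i)) - (d + 4) * S := rfl
    rw [← h3]
    linarith
  have hcont : Continuous F := by
    apply Continuous.sub _ (by fun_prop)
    apply continuous_finset_sum
    intro i _
    exact (Real.continuous_sqrt.comp (by fun_prop))
  have h0mem : (0:ℝ) ∈ Set.Icc (F S) (F 0) := by
    constructor
    · linarith
    · rw [hF0]; linarith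
  obtain ⟨c, hc, hFc⟩ := intermediate_value_Icc' hS0.le hcont.continuousOn h0mem
  refine ⟨c, hc.1, ?_⟩
  have : (∑ i, Real.sqrt (c^2 + 16 * μ i)) - (d + 4) * c = 0 := hFc
  linarith

lemma posDef_smul {d : ℕ} {M : Matrix (Fin d) (Fin d) ℝ} {r : ℝ}
    (hr : 0 < r) (hM : M.PosDef) : (r • M).PosDef := by
  refine Matrix.posDef_iff_dotProduct_mulVec.mpr ⟨?_, fun x hx => ?_⟩
  · rw [IsHermitian, conjTranspose_smul]
    simp [← conjTranspose_eq_transpose_of_trivial, hM.1.eq]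
  · have h := hM.dotProduct_mulVec_pos hx
    rw [smul_mulVec, dotProduct_smul]
    exact mul_pos hr h

lemma posDef_trace_pos {d : ℕ} (hd : 0 < d) {A : Matrix (Fin d) (Fin d) ℝ}
    (hA : A.PosDef) : 0 < A.trace := by
  haveI : Nonempty (Fin d) := Fin.pos_iff_nonempty.mp hd
  rw [Matrix.trace]
  apply Finset.sum_pos _ Finset.univ_nonempty
  intro i _
  have hne : (Pi.single i 1 : Fin d → ℝ) ≠ 0 := by
    intro h
    simpa using congrFun h i
  have := hA.dotProduct_mulVec_pos hne
  have heq : star (Pi.single i 1 : Fin d → ℝ) ⬝ᵥ A *ᵥ (Pi.single i 1) = A i i := by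
    simp [dotProduct, Matrix.mulVec_single, Pi.single_apply]
  rw [heq] at this
  simpa [Matrix.diag] using this

lemma key {d : ℕ} (hd : 0 < d) (N : Matrix (Fin d) (Fin d) ℝ) (hN : N.PosDef) :
    ∃! A : Matrix (Fin d) (Fin d) ℝ,
      A.PosDef ∧ (2 * A.trace) • A + (4 : ℝ) • (A * A) = N := by
  haveI : Nonempty (Fin d) := Fin.pos_iff_nonempty.mp hd
  set hH := hN.1 with hHdef
  set μ : Fin d → ℝ := hH.eigenvalues with hμdef
  have hμpos : ∀ i, 0 < μ i := hN.eigenvalues_pos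
  set U : Matrix (Fin d) (Fin d) ℝ := (hH.eigenvectorUnitary : Matrix (Fin d) (Fin d) ℝ)
    with hUdef
  have hU1 : U * Uᵀ = 1 := by
    have := Matrix.mem_unitaryGroup_iff.mp hH.eigenvectorUnitary.2
    simpa [Matrix.star_eq_conjTranspose, conjTranspose_eq_transpose_of_trivial] using this
  have hU2 : Uᵀ * U = 1 := by
    have := Matrix.mem_unitaryGroup_iff'.mp hH.eigenvectorUnitary.2
    simpa [Matrix.star_eq_conjTranspose, conjTranspose_eq_transpose_of_trivial] using this
  have hUunit : IsUnit Uᵀ := by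
    apply Matrix.isUnit_iff_isUnit_det _ |>.mpr
    have := congrArg Matrix.det hU2
    simp only [Matrix.det_mul, Matrix.det_one] at this
    exact IsUnit.of_mul_eq_one _ this
  set T : (Fin d → ℝ) → Matrix (Fin d) (Fin d) ℝ := fun v => U * diagonal v * Uᵀ with hTdef
  have hspec : N = T μ := by
    have := hH.spectral_theorem
    simpa [hTdef, Matrix.star_eq_conjTranspose, conjTranspose_eq_transpose_of_trivial,
      Function.comp] using this
  -- properties of T
  have hTmul : ∀ v w, T v * T w = T (v * w) := by
    intro v w
    simp only [hTdef, Matrix.mul_assoc]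
    rw [← Matrix.mul_assoc Uᵀ U, hU2, Matrix.one_mul, ← Matrix.mul_assoc (diagonal v),
      diagonal_mul_diagonal]
    rfl
  have hTsmul : ∀ (r : ℝ) v, r • T v = T (r • v) := by
    intro r v
    simp only [hTdef, diagonal_smul, Matrix.smul_mul, Matrix.mul_smul]
  have hTadd : ∀ v w, T v + T w = T (v + w) := by
    intro v w
    simp only [hTdef]
    have hd2 : diagonal v + diagonal w = diagonal (v + w) := diagonal_add v w
    rw [← hd2, Matrix.mul_add, Matrix.add_mul]
  have hTtrace : ∀ v, (T v).trace = ∑ i, v i := by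
    intro v
    rw [hTdef]
    rw [Matrix.trace_mul_cycle, hU2, Matrix.one_mul, trace_diagonal]
  have hTposdef : ∀ v, (∀ i, 0 < v i) → (T v).PosDef := by
    intro v hv
    have := conj_posDef (Matrix.PosDef.diagonal hv) hUunit
    simpa [hTdef, transpose_transpose] using this
  have hTpsd : ∀ v, (∀ i, 0 ≤ v i) → (T v).PosSemidef := by
    intro v hv
    have := (Matrix.PosSemidef.diagonal hv).mul_mul_conjTranspose_same U
    simpa [hTdef, conjTranspose_eq_transpose_of_trivial] using this
  have hTone : T 1 = 1 := by
    simp only [hTdef, Pi.one_def, diagonal_one, Matrix.mul_one, hU1]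
  -- existence
  obtain ⟨c, hc0, hceq⟩ := F_root_exists hd μ hμpos
  set a : Fin d → ℝ := fun i => (Real.sqrt (c^2 + 16 * μ i) - c) / 8 with hadef
  have ha : ∀ i, 0 < a i := by
    intro i
    have h1 : c < Real.sqrt (c^2 + 16 * μ i) := by
      have : Real.sqrt (c^2) < Real.sqrt (c^2 + 16 * μ i) := by
        apply Real.sqrt_lt_sqrt (by positivity)
        nlinarith [hμpos i]
      rwa [Real.sqrt_sq hc0] at this
    simp only [hadef]
    linarith
  have hsuma : ∑ i, a i = c / 2 := by
    simp only [hadef]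
    rw [← Finset.sum_div, Finset.sum_sub_distrib, hceq, Finset.sum_const, Finset.card_univ,
      Fintype.card_fin, nsmul_eq_mul]
    ring
  set A : Matrix (Fin d) (Fin d) ℝ := T a with hAdef
  have hAtr : A.trace = c / 2 := by rw [hAdef, hTtrace, hsuma]
  have hApos : A.PosDef := hTposdef a ha
  have hAeq : (2 * A.trace) • A + (4 : ℝ) • (A * A) = N := by
    have hvec : (2 * (c/2)) • a + (4:ℝ) • (a * a) = μ := by
      funext i
      have hs : Real.sqrt (c^2 + 16 * μ i) ^ 2 = c^2 + 16 * μ i :=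
        Real.sq_sqrt (by nlinarith [hμpos i])
      have hai : a i = (Real.sqrt (c^2 + 16 * μ i) - c) / 8 := rfl
      simp only [Pi.add_apply, Pi.smul_apply, Pi.mul_apply, smul_eq_mul]
      rw [hai]
      linear_combination hs / 16
    rw [hAtr, hAdef, hTmul, hTsmul, hTsmul, hTadd, hvec]
    exact hspec.symm
  refine ⟨A, ⟨hApos, hAeq⟩, ?_⟩
  -- uniqueness
  have main : ∀ B : Matrix (Fin d) (Fin d) ℝ,
      B.PosDef → (2 * B.trace) • B + (4 : ℝ) • (B * B) = N →
      ∃ c', 0 ≤ c' ∧ (∑ i, Real.sqrt (c'^2 + 16 * μ i)) = (d + 4) * c' ∧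
        (8:ℝ) • B + c' • (1 : Matrix (Fin d) (Fin d) ℝ) =
          T (fun i => Real.sqrt (c'^2 + 16 * μ i)) := by
    intro B hB hBeq
    set c' : ℝ := 2 * B.trace with hc'def
    have hc'pos : 0 < c' := by
      have := posDef_trace_pos hd hB
      simp only [hc'def]
      linarith
    set SB : Matrix (Fin d) (Fin d) ℝ := (8:ℝ) • B + c' • 1 with hSBdef
    have hSBpos : SB.PosDef := by
      apply Matrix.PosDef.add
      · exact posDef_smul (by norm_num) hB
      · exact posDef_smul hc'pos Matrix.PosDef.one
    have hSB2 : SB * SB = (16:ℝ) • N + (c'^2) • 1 := by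
      rw [← hBeq]
      simp only [hSBdef]
      simp only [Matrix.add_mul, Matrix.mul_add, smul_mul_assoc, mul_smul_comm, smul_smul,
        Matrix.mul_one, Matrix.one_mul, smul_add]
      module
    set Tc := T (fun i => Real.sqrt (c'^2 + 16 * μ i)) with hTcdef
    have hTcpsd : Tc.PosSemidef := hTpsd _ (fun i => Real.sqrt_nonneg _)
    have hTc2 : Tc * Tc = (16:ℝ) • N + (c'^2) • 1 := by
      have hvec : (fun i => Real.sqrt (c'^2 + 16 * μ i)) * (fun i => Real.sqrt (c'^2 + 16 * μ i))
          = (16:ℝ) • μ + (c'^2) • (1 : Fin d → ℝ) := by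
        funext i
        have hs : Real.sqrt (c'^2 + 16 * μ i) ^ 2 = c'^2 + 16 * μ i :=
          Real.sq_sqrt (by nlinarith [hμpos i])
        simp only [Pi.mul_apply, Pi.add_apply, Pi.smul_apply, Pi.one_apply, smul_eq_mul]
        linear_combination hs
      rw [hTcdef, hTmul, hvec, ← hTadd, ← hTsmul, ← hTsmul, ← hspec, hTone]
    have hSBTc : SB = Tc := by
      open scoped MatrixOrder in apply (CFC.sq_eq_sq_iff SB Tc (Matrix.nonneg_iff_posSemidef.mpr hSBpos.posSemidef) (Matrix.nonneg_iff_posSemidef.mpr hTcpsd)).mp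
      rw [pow_two, pow_two, hSB2, hTc2]
    have htr : (∑ i, Real.sqrt (c'^2 + 16 * μ i)) = (d + 4) * c' := by
      have h1 : SB.trace = 8 * B.trace + c' * d := by
        simp [hSBdef, Matrix.trace_add, Matrix.trace_smul, Matrix.trace_one, smul_eq_mul,
          Finset.card_univ]
      have h2 : Tc.trace = ∑ i, Real.sqrt (c'^2 + 16 * μ i) := hTtrace _
      rw [← h2, ← hSBTc, h1, hc'def]
      push_cast
      ring
    exact ⟨c', hc'pos.le, htr, hSBTc⟩
  intro B ⟨hB, hBeq⟩
  obtain ⟨cB, hcB0, hcBeq, hcBmat⟩ := main B hB hBeq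
  obtain ⟨cA, hcA0, hcAeq, hcAmat⟩ := main A hApos hAeq
  have hcc : cB = cA := F_root_unique μ (fun i => (hμpos i).le) hcB0 hcA0 hcBeq hcAeq
  rw [hcc] at hcBmat
  have : (8:ℝ) • B + cA • (1 : Matrix (Fin d) (Fin d) ℝ) = (8:ℝ) • A + cA • 1 := by
    rw [hcBmat, hcAmat]
  have h8 : (8:ℝ) • B = (8:ℝ) • A := by
    have := congrArg (fun X => X - cA • (1 : Matrix (Fin d) (Fin d) ℝ)) this
    simpa using this
  have := congrArg (fun X => (8:ℝ)⁻¹ • X) h8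
  simpa [smul_smul] using this

theorem riccati_exists_unique
    (d : ℕ) (J K : Matrix (Fin d) (Fin d) ℝ)
    (hJ : J.PosDef) (hK : IsUnit K) :
    ∃! L : Matrix (Fin d) (Fin d) ℝ,
      L.PosDef ∧ (2 * (L * J).trace) • L + (4 : ℝ) • (L * J * L) = Kᵀ * J * K := by
  rcases Nat.eq_zero_or_pos d with hd | hd
  · subst hd
    haveI : IsEmpty (Fin 0) := by infer_instance
    refine ⟨Kᵀ * J * K, ⟨⟨Subsingleton.elim _ _, fun x hx => absurd (Subsingleton.elim x 0) hx⟩,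
      Subsingleton.elim _ _⟩, fun y _ => Subsingleton.elim _ _⟩
  · -- P := sqrt of J
    obtain ⟨P, hPsd, hPP⟩ : ∃ P : Matrix (Fin d) (Fin d) ℝ, P.PosSemidef ∧ P * P = J :=
      open scoped MatrixOrder in ⟨CFC.sqrt J, Matrix.nonneg_iff_posSemidef.mp (CFC.sqrt_nonneg J), CFC.sqrt_mul_sqrt_self J (Matrix.nonneg_iff_posSemidef.mpr hJ.posSemidef)⟩
    have hPsymm : Pᵀ = P := by
      have := hPsd.1.eq
      rwa [conjTranspose_eq_transpose_of_trivial] at this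
    have hPunit : IsUnit P := by
      apply Matrix.isUnit_iff_isUnit_det _ |>.mpr
      have hdet : P.det * P.det = J.det := by rw [← Matrix.det_mul, hPP]
      have hJdet : IsUnit J.det := hJ.det_pos.ne'.isUnit
      rcases hJdet with ⟨u, hu⟩
      exact isUnit_of_mul_isUnit_left (by rw [hdet, ← hu]; exact u.isUnit)
    have hPdet : P.det ≠ 0 := by
      intro h
      rw [Matrix.isUnit_iff_isUnit_det, h] at hPunit
      simpa using hPunit
    have hPinv1 : P * P⁻¹ = 1 := Matrix.mul_nonsing_inv P (hPdet.isUnit)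
    have hPinv2 : P⁻¹ * P = 1 := Matrix.nonsing_inv_mul P (hPdet.isUnit)
    have hPinvsymm : (P⁻¹)ᵀ = P⁻¹ := by rw [Matrix.transpose_nonsing_inv, hPsymm]
    have hPinvunit : IsUnit P⁻¹ := by
      apply Matrix.isUnit_iff_isUnit_det _ |>.mpr
      exact IsUnit.of_mul_eq_one _ (by rw [← Matrix.det_mul, hPinv2, Matrix.det_one])
    -- N
    have hM : (Kᵀ * J * K).PosDef := conj_posDef hJ hK
    set N : Matrix (Fin d) (Fin d) ℝ := P * (Kᵀ * J * K) * P with hNdef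
    have hNpos : N.PosDef := by
      have := conj_posDef hM hPunit
      rwa [hPsymm] at this
    obtain ⟨A, ⟨hApos, hAeq⟩, hAuniq⟩ := key hd N hNpos
    have cancel : ∀ X : Matrix (Fin d) (Fin d) ℝ, P⁻¹ * (P * X * P) * P⁻¹ = X := by
      intro X
      calc P⁻¹ * (P * X * P) * P⁻¹ = (P⁻¹ * P) * X * (P * P⁻¹) := by noncomm_ring
        _ = X := by rw [hPinv2, hPinv1, Matrix.one_mul, Matrix.mul_one]
    have cancel2 : ∀ X : Matrix (Fin d) (Fin d) ℝ, P * (P⁻¹ * X * P⁻¹) * P = X := by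
      intro X
      calc P * (P⁻¹ * X * P⁻¹) * P = (P * P⁻¹) * X * (P⁻¹ * P) := by noncomm_ring
        _ = X := by rw [hPinv2, hPinv1, Matrix.one_mul, Matrix.mul_one]
    -- correspondence
    have corr : ∀ L : Matrix (Fin d) (Fin d) ℝ,
        ((2 * (L * J).trace) • L + (4 : ℝ) • (L * J * L) = Kᵀ * J * K) ↔
        ((2 * (P * L * P).trace) • (P * L * P) + (4 : ℝ) • ((P * L * P) * (P * L * P)) = N) := by
      intro L
      have htr : (L * J).trace = (P * L * P).trace := by
        rw [← hPP, ← Matrix.mul_assoc, Matrix.trace_mul_comm (L * P) P, Matrix.mul_assoc]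
      have hconj : (2 * (P * L * P).trace) • (P * L * P) + (4:ℝ) • ((P * L * P) * (P * L * P))
          = P * ((2 * (L * J).trace) • L + (4 : ℝ) • (L * J * L)) * P := by
        rw [htr]
        rw [Matrix.mul_add, Matrix.add_mul]
        congr 1
        · rw [Matrix.mul_smul, Matrix.smul_mul]
        · rw [Matrix.mul_smul, Matrix.smul_mul]
          congr 1
          rw [← hPP]
          noncomm_ring
      constructor
      · intro h
        rw [hconj, h]
      · intro h
        rw [hconj] at h
        have h2 := congrArg (fun X => P⁻¹ * X * P⁻¹) h
        rw [cancel] at h2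
        rw [h2, hNdef, cancel]
    have poscorr : ∀ L : Matrix (Fin d) (Fin d) ℝ, L.PosDef → (P * L * P).PosDef := by
      intro L hL
      have := conj_posDef hL hPunit
      rwa [hPsymm] at this
    refine ⟨P⁻¹ * A * P⁻¹, ⟨?_, ?_⟩, ?_⟩
    · have := conj_posDef hApos hPinvunit
      rwa [hPinvsymm] at this
    · rw [corr, cancel2]
      exact hAeq
    · intro L ⟨hL, hLeq⟩
      have h1 : P * L * P = A := by
        apply hAuniq
        exact ⟨poscorr L hL, (corr L).mp hLeq⟩
      have h2 := congrArg (fun X => P⁻¹ * X * P⁻¹) h1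
      rw [cancel] at h2
      exact h2
end

section
/- Let Σ be a d×d positive definite matrix, π ∈ ℝ^d, and {eᵢ} the standard basis of ℝ^d. Define the d×d matrix G by G^{ij} = Hⁱ Hʲ (π − eᵢ)ᵀ Σ (π − eⱼ) for nonzero reals H¹,…,H^d. Then G = Uᵀ U where U is the matrix whose i-th column is Uⁱ = Hⁱ Σ^{1/2}(π − eᵢ); in particular G is positive semidefinite, and G is positive definite whenever 1 − Σᵢ πⁱ ≠ 0. -/
set_option maxHeartbeats 1000000

open Finset Matrix

theorem quadratic_covariation_structure
    (d : ℕ) (Sig : Matrix (Fin d) (Fin d) ℝ) (hSig : Sig.PosDef)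
    (π : Fin d → ℝ) (H : Fin d → ℝ) (hH : ∀ i, H i ≠ 0)
    (G U : Matrix (Fin d) (Fin d) ℝ)
    (hG : G = Matrix.of fun i j =>
      H i * H j * ((π - Pi.single i 1) ⬝ᵥ (Sig *ᵥ (π - Pi.single j 1))))
    (hU : U = Matrix.of fun i j =>
      H j * (((hSig.posSemidef.1.eigenvectorUnitary.1 *
        diagonal ((↑) ∘ (√·) ∘ hSig.posSemidef.1.eigenvalues) *
        (star hSig.posSemidef.1.eigenvectorUnitary : Matrix (Fin d) (Fin d) ℝ)) *ᵥ (π - Pi.single j 1)) i)) :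
    G = Uᵀ * U ∧ G.PosSemidef ∧ (1 - ∑ i, π i ≠ 0 → G.PosDef) := by
  classical
  set S := (hSig.posSemidef.1.eigenvectorUnitary.1 *
        diagonal ((↑) ∘ (√·) ∘ hSig.posSemidef.1.eigenvalues) *
        (star hSig.posSemidef.1.eigenvectorUnitary : Matrix (Fin d) (Fin d) ℝ)) with hSdef
  have hSh : Sᵀ = S := by
    rw [hSdef, ← conjTranspose_eq_transpose_of_trivial]
    simp only [conjTranspose_mul, diagonal_conjTranspose, star_eq_conjTranspose,
      conjTranspose_conjTranspose, star_trivial, Matrix.mul_assoc]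
  have hSS : S * S = Sig := by
    have hV := Unitary.coe_star_mul_self hSig.posSemidef.1.eigenvectorUnitary
    conv_rhs => rw [hSig.posSemidef.1.spectral_theorem, Unitary.conjStarAlgAut_apply]
    rw [hSdef]
    calc _ = hSig.posSemidef.1.eigenvectorUnitary.1 *
        diagonal ((↑) ∘ (√·) ∘ hSig.posSemidef.1.eigenvalues) *
        ((star hSig.posSemidef.1.eigenvectorUnitary : Matrix (Fin d) (Fin d) ℝ) * hSig.posSemidef.1.eigenvectorUnitary.1) *
        diagonal ((↑) ∘ (√·) ∘ hSig.posSemidef.1.eigenvalues) *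
        (star hSig.posSemidef.1.eigenvectorUnitary : Matrix (Fin d) (Fin d) ℝ) := by
          simp only [Matrix.mul_assoc]
      _ = _ := by
        rw [hV, Matrix.mul_one, Matrix.mul_assoc _ (diagonal _) (diagonal _), diagonal_mul_diagonal]
        congr 3
        funext i
        simp [Real.mul_self_sqrt (hSig.posSemidef.eigenvalues_nonneg i)]
  have dotconv : ∀ a b : Fin d → ℝ,
      a ⬝ᵥ (Sig *ᵥ b) = (S *ᵥ a) ⬝ᵥ (S *ᵥ b) := by
    intro a b
    rw [← hSS, ← mulVec_mulVec, dotProduct_mulVec]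
    nth_rewrite 1 [← hSh]
    rw [vecMul_transpose]
  have key : G = Uᵀ * U := by
    subst hG hU
    ext i j
    simp only [Matrix.mul_apply, Matrix.transpose_apply, Matrix.of_apply]
    rw [dotconv, dotProduct, Finset.mul_sum]
    congr 1; ext k; ring
  refine ⟨key, ?_, ?_⟩
  · rw [key]
    have := Matrix.posSemidef_conjTranspose_mul_self U
    simpa using this
  · intro hπ
    -- S is invertible
    have hdet : S.det ≠ 0 := by
      intro h
      have : Sig.det = 0 := by rw [← hSS, Matrix.det_mul, h, mul_zero]
      exact (ne_of_gt hSig.det_pos) this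
    have hSinj : Function.Injective S.mulVec :=
      Matrix.mulVec_injective_iff_isUnit.mpr ((Matrix.isUnit_iff_isUnit_det S).mpr hdet.isUnit)
    refine posDef_iff_dotProduct_mulVec.mpr ⟨(key ▸ Matrix.posSemidef_conjTranspose_mul_self U).1, ?_⟩
    intro x hx
    have hUx : U *ᵥ x ≠ 0 := by
      set c : Fin d → ℝ := fun j => x j * H j with hc
      set s : ℝ := ∑ j, c j with hs
      set w : Fin d → ℝ := fun k => s * π k - c k with hw
      have hUw : U *ᵥ x = S *ᵥ w := by
        subst hU
        ext i
        simp only [Matrix.mulVec, dotProduct, Matrix.of_apply, hw]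
        have L : ∀ j, (H j * ∑ k, S i k * ((π - Pi.single j 1 : Fin d → ℝ) k)) * x j
            = c j * (∑ k, S i k * π k) - c j * S i j := by
          intro j
          have hsingle : (∑ k, S i k * (Pi.single j (1:ℝ) : Fin d → ℝ) k) = S i j := by
            rw [Finset.sum_eq_single j]
            · simp
            · intro b _ hb; simp [Pi.single_apply, hb]
            · simp
          simp only [Pi.sub_apply, mul_sub, Finset.sum_sub_distrib, hsingle, hc]
          ring
        calc ∑ j, (H j * ∑ k, S i k * ((π - Pi.single j 1 : Fin d → ℝ) k)) * x j
            = ∑ j, (c j * (∑ k, S i k * π k) - c j * S i j) :=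
              Finset.sum_congr rfl fun j _ => L j
          _ = s * (∑ k, S i k * π k) - ∑ j, c j * S i j := by
              rw [Finset.sum_sub_distrib, ← Finset.sum_mul, ← hs]
          _ = ∑ k, S i k * (s * π k - c k) := by
              simp only [mul_sub, Finset.sum_sub_distrib, Finset.mul_sum]
              congr 1
              · exact Finset.sum_congr rfl fun k _ => by ring
              · exact Finset.sum_congr rfl fun k _ => by ring
      have hwne : w ≠ 0 := by
        intro h0
        have hck : ∀ k, c k = s * π k := by
          intro k
          have := congrFun h0 k
          simp only [hw, Pi.zero_apply] at this
          linarith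
        have hss : s = s * ∑ k, π k := by
          rw [hs, Finset.mul_sum]
          exact Finset.sum_congr rfl fun k _ => hck k
        have hs0 : s = 0 := by
          by_contra hsne
          apply hπ
          have : s * (1 - ∑ k, π k) = 0 := by rw [mul_sub, mul_one, ← hss, sub_self]
          rcases mul_eq_zero.mp this with h | h
          · exact absurd h hsne
          · exact absurd h (by intro hh; exact hπ hh)
        have hc0 : ∀ k, c k = 0 := fun k => by rw [hck k, hs0, zero_mul]
        apply hx
        ext k
        have := hc0 k
        rw [hc] at this
        exact (mul_eq_zero.mp this).resolve_right (hH k)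
      rw [hUw]
      intro h
      exact hwne (hSinj (by simpa using h))
    rw [key]
    have calc1 : star x ⬝ᵥ ((Uᵀ * U) *ᵥ x) = (U *ᵥ x) ⬝ᵥ (U *ᵥ x) := by
      rw [← mulVec_mulVec, dotProduct_mulVec, star_trivial, vecMul_transpose]
    rw [calc1]
    rcases lt_or_eq_of_le (Finset.sum_nonneg fun i _ => mul_self_nonneg ((U *ᵥ x) i)) with h | h
    · exact h
    · exact absurd (dotProduct_self_eq_zero.mp h.symm) hUx
end
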